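/- arXiv:2305.16064 — 2 statements merged into one kernel-verified Lean document; each statement's English description precedes it below -/
import Mathlib

section
/- Let p > 3 be a prime with p ≡ 3 (mod 4), and let a_1,...,a_{(p-1)/2} be all nonzero quadratic residues modulo p. Then the determinant D of [(a_i + a_j)^{(p-3)/2}]_{1≤i,j≤(p-1)/2} over F_p is nonzero, and its Legendre symbol satisfies (D/p) = (((p-1)/2)! / p), i.e., D is a square in F_p exactly when ((p-1)/2)! is a square mod p. -/
/-!
With `n = (p - 1) / 2` and `m = n - 1`, the binomial expansion of `(a i + a j) ^ m` factors the
matrix as `V(a) · diag (m.choose k) · R`, where `V(a)` is the Vandermonde matrix and `R` is its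
transpose with the rows reversed. Hence `D = (-1) ^ (n.choose 2) · ∏ m.choose k · det V(a) ^ 2`.
Since `∏ m.choose k · (∏ k !) ^ 2 = m ! ^ (m + 1)` and `m` is even, `∏ m.choose k` has the
quadratic character of `m !`. Finally `n ≡ -1/2`, so by the supplementary law for `(2/p)` the
character of `n` is `(-1) ^ (n.choose 2)`, and `(D/p) = (n · m ! / p) = (n ! / p)`.
-/

open Finset Matrix Nat

theorem Nat.prod_range_choose_mul_sq_prod_range_factorial (m : ℕ) :
    (∏ k ∈ range (m + 1), m.choose k) * (∏ k ∈ range (m + 1), k !) ^ 2 = m ! ^ (m + 1) := by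
  have hreflect : ∏ k ∈ range (m + 1), (m - k)! = ∏ k ∈ range (m + 1), k ! := by
    simpa using prod_range_reflect (fun k => k !) (m + 1)
  calc (∏ k ∈ range (m + 1), m.choose k) * (∏ k ∈ range (m + 1), k !) ^ 2
      = ∏ k ∈ range (m + 1), m.choose k * k ! * (m - k)! := by
        rw [prod_mul_distrib, prod_mul_distrib, hreflect, sq, mul_assoc]
    _ = ∏ _k ∈ range (m + 1), m ! :=
        prod_congr rfl fun k hk => choose_mul_factorial_mul_factorial (mem_range_succ_iff.mp hk)
    _ = m ! ^ (m + 1) := by rw [prod_const, card_range]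

theorem Fin.sum_card_Ioi (n : ℕ) : ∑ i : Fin n, #(Ioi i) = n.choose 2 := by
  simp only [Fin.card_Ioi]
  rw [Fin.sum_univ_eq_sum_range (fun i => n - 1 - i), sum_range_reflect (fun i => i) n,
    sum_range_id, choose_two_right]

namespace Matrix

variable {R : Type*} [CommRing R]

theorem det_projVandermonde_one_left {n : ℕ} (v : Fin n → R) :
    (projVandermonde 1 v).det = (-1) ^ n.choose 2 * (vandermonde v).det := by
  have hsub (i j : Fin n) :
      (1 : Fin n → R) j * v i - (1 : Fin n → R) i * v j = -1 * (v j - v i) := by simp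
  simp only [det_projVandermonde, det_vandermonde, hsub, prod_mul_distrib, prod_const,
    prod_pow_eq_pow_sum, Fin.sum_card_Ioi]

theorem det_of_add_pow {n m : ℕ} (hn : n = m + 1) (a : Fin n → R) :
    (of fun i j => (a i + a j) ^ m).det =
      (-1) ^ n.choose 2 * (∏ k ∈ range n, (m.choose k : R)) * (vandermonde a).det ^ 2 := by
  subst hn
  have hfactor : (of fun i j => (a i + a j) ^ m) =
      vandermonde a *
        of fun k j : Fin (m + 1) => (m.choose k : R) * (projVandermonde 1 a)ᵀ k j := by
    ext i j
    simp only [of_apply, mul_apply, vandermonde_apply, transpose_apply, projVandermonde_apply,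
      Pi.one_apply, one_pow, one_mul, Fin.val_rev, add_pow]
    rw [← Fin.sum_univ_eq_sum_range]
    refine sum_congr rfl fun k _ => ?_
    rw [show m + 1 - (k + 1) = m - k by omega]
    ring
  rw [hfactor, det_mul, det_mul_column, det_transpose, det_projVandermonde_one_left,
    Fin.prod_univ_eq_prod_range (fun k => (m.choose k : R))]
  ring

end Matrix

section QuadraticChar

variable {F : Type*} [Field F] [Fintype F] [DecidableEq F]

theorem quadraticChar_prod_range_choose {m : ℕ} (hm : Even m) (hfac : (m ! : F) ≠ 0) :
    quadraticChar F (∏ k ∈ range (m + 1), (m.choose k : F)) = quadraticChar F (m ! : F) := by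
  have hprod : (∏ k ∈ range (m + 1), (k ! : F)) ≠ 0 :=
    prod_ne_zero_iff.mpr fun k hk h => hfac <| zero_dvd_iff.mp <| h ▸
      Nat.cast_dvd_cast (factorial_dvd_factorial (mem_range_succ_iff.mp hk))
  obtain ⟨t, ht⟩ := hm
  have hid := congrArg (Nat.cast : ℕ → F) (prod_range_choose_mul_sq_prod_range_factorial m)
  push_cast at hid
  rw [show (m ! : F) ^ (m + 1) = m ! * ((m ! : F) ^ t) ^ 2 by rw [ht]; ring] at hid
  have hχ := congrArg (quadraticChar F) hid
  rwa [map_mul, map_mul, quadraticChar_sq_one' hprod, quadraticChar_sq_one' (pow_ne_zero t hfac),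
    mul_one, mul_one] at hχ

end QuadraticChar

section ZMod

variable {p : ℕ} [Fact p.Prime]

theorem ZMod.quadraticChar_neg_one_of_mod_four (hp : p % 4 = 3) :
    quadraticChar (ZMod p) (-1) = -1 :=
  quadraticChar_neg_one_iff_not_isSquare.mpr fun h => ZMod.exists_sq_eq_neg_one_iff.mp h hp

theorem ZMod.quadraticChar_pred_div_two (hp : p % 4 = 3) :
    quadraticChar (ZMod p) ((p - 1) / 2 : ℕ) = (-1) ^ ((p - 1) / 2).choose 2 := by
  have hhalf : (2 : ZMod p) * ((p - 1) / 2 : ℕ) = -1 := by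
    have hcast : (((2 * ((p - 1) / 2) + 1 : ℕ)) : ZMod p) = 0 := by
      rw [show 2 * ((p - 1) / 2) + 1 = p by omega, ZMod.natCast_self]
    push_cast at hcast
    exact eq_neg_of_add_eq_zero_left hcast
  have hχ : quadraticChar (ZMod p) 2 * quadraticChar (ZMod p) ((p - 1) / 2 : ℕ) = -1 := by
    rw [← map_mul, hhalf, quadraticChar_neg_one_of_mod_four hp]
  rw [quadraticChar_two (by rw [ZMod.ringChar_zmod_n]; omega), ZMod.card,
    χ₈_nat_eq_if_mod_eight] at hχ
  obtain ⟨s, hs | hs⟩ : ∃ s, p = 8 * s + 3 ∨ p = 8 * s + 7 := ⟨p / 8, by omega⟩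
  · have hchoose : ((p - 1) / 2).choose 2 = 2 * (s * (4 * s + 1)) := by
      rw [show (p - 1) / 2 = 4 * s + 1 by omega, choose_two_right]
      exact Nat.div_eq_of_eq_mul_left two_pos (by rw [Nat.add_sub_cancel]; ring)
    rw [hchoose, pow_mul, neg_one_sq, one_pow]
    rw [if_neg (by omega), if_neg (by omega)] at hχ
    linarith
  · have hchoose : ((p - 1) / 2).choose 2 = 2 * (4 * s * s + 5 * s + 1) + 1 := by
      rw [show (p - 1) / 2 = 4 * s + 3 by omega, choose_two_right]
      exact Nat.div_eq_of_eq_mul_left two_pos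
        (by rw [show 4 * s + 3 - 1 = 4 * s + 2 by omega]; ring)
    rw [hchoose, pow_succ, pow_mul, neg_one_sq, one_pow]
    rw [if_neg (by omega), if_pos (by omega)] at hχ
    linarith

end ZMod

theorem stmt_11_general (p : ℕ) [Fact p.Prime] (h4 : p % 4 = 3)
    (a : Fin ((p - 1) / 2) → ZMod p) (ha : Function.Injective a) :
    Matrix.det (Matrix.of fun i j : Fin ((p - 1) / 2) => (a i + a j) ^ ((p - 3) / 2)) ≠ 0 ∧
    (IsSquare (Matrix.det (Matrix.of fun i j : Fin ((p - 1) / 2) =>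
        (a i + a j) ^ ((p - 3) / 2))) ↔
      IsSquare ((Nat.factorial ((p - 1) / 2) : ZMod p))) := by
  have hnm : (p - 1) / 2 = (p - 3) / 2 + 1 := by omega
  have hfac (k : ℕ) (hk : k < p) : (k ! : ZMod p) ≠ 0 := by
    rw [Ne, ZMod.natCast_eq_zero_iff, Nat.Prime.dvd_factorial Fact.out]
    omega
  have hχ : quadraticChar (ZMod p)
        (of fun i j : Fin ((p - 1) / 2) => (a i + a j) ^ ((p - 3) / 2)).det =
      quadraticChar (ZMod p) (((p - 1) / 2)! : ZMod p) := by
    rw [det_of_add_pow hnm, map_mul, map_mul, map_pow, map_pow,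
      quadraticChar_sq_one (det_vandermonde_ne_zero_iff.mpr ha),
      ZMod.quadraticChar_neg_one_of_mod_four h4, ← ZMod.quadraticChar_pred_div_two h4, hnm,
      quadraticChar_prod_range_choose ⟨(p - 3) / 4, by omega⟩ (hfac _ (by omega)),
      factorial_succ, Nat.cast_mul, map_mul, ← hnm, mul_one]
  refine ⟨?_, ?_⟩
  · rw [Ne, ← quadraticChar_eq_zero_iff, hχ, quadraticChar_eq_zero_iff]
    exact hfac _ (by omega)
  · rw [← not_iff_not, ← quadraticChar_neg_one_iff_not_isSquare,
      ← quadraticChar_neg_one_iff_not_isSquare, hχ]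

theorem stmt_11 (p : ℕ) [Fact p.Prime] (h4 : p % 4 = 3) (hp3 : 3 < p)
    (a : Fin ((p - 1) / 2) → ZMod p) (ha : Function.Injective a)
    (hsq : ∀ x : ZMod p, (∃ i, a i = x) ↔ x ≠ 0 ∧ ∃ y : ZMod p, y ^ 2 = x) :
    Matrix.det (Matrix.of fun i j : Fin ((p - 1) / 2) => (a i + a j) ^ ((p - 3) / 2)) ≠ 0 ∧
    (IsSquare (Matrix.det (Matrix.of fun i j : Fin ((p - 1) / 2) =>
        (a i + a j) ^ ((p - 3) / 2))) ↔
      IsSquare ((Nat.factorial ((p - 1) / 2) : ZMod p))) :=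
  stmt_11_general p h4 a ha
end

section
/- Let F_q be a finite field of odd characteristic p, let 1 < k ≤ q-1 with k | q-1, and let a_1,...,a_k be the k-th roots of unity in F_q. Define T_k = [(a_i² + a_i a_j + a_j²)^{(q-3)/2}]_{1≤i,j≤k}. Then det T_k = l_k · k^k in F_p, where l_k = ∏_{s=0}^{k-1} ∑_{r=0}^{⌊(q-3-s)/k⌋} T((q-3)/2, (q-3)/2 - s - kr), and T(n, j) denotes the trinomial coefficient, i.e., the coefficient of x^j in (x² + x + 1)^n shifted so that T(n,j) is the coefficient of x^j in (x + 1 + 1/x)^n. -/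
/-- The trinomial coefficient `binom(n,r)₂`: the coefficient of `x^(n+r)` in
`(x² + x + 1)^n`, defined to be `0` when `n + r < 0`. -/
noncomputable def trinomialCoeff (n : ℕ) (r : ℤ) : ℤ :=
  if 0 ≤ (n : ℤ) + r then
    ((Polynomial.X ^ 2 + Polynomial.X + 1 : Polynomial ℤ) ^ n).coeff ((n : ℤ) + r).toNat
  else 0

/-!
With `x = a i / a j` and `P = (X² + X + 1)ⁿ`, the `(i, j)` entry is `a j ^ (2n) * P(x)`, and since
`x ^ k = 1`, `P(x) = ∑_{s < k} c_s x^s`, where `c_s` sums the coefficients of `P` whose index is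
`≡ s (mod k)`. So the matrix factors as `V * diag c * (diag (a ^ (2n)) * W)ᵀ`, with `V` and `W` the
Vandermonde matrices of the `a i` and of the `a i⁻¹`. Orthogonality of the `k`-th roots of unity
gives `Vᵀ * W = k • 1`; inversion permutes the `a i`, so `(∏ a i)² = 1`; and the palindromic
symmetry of `P` identifies `c_s` with the sum of trinomial coefficients.
-/

open Polynomial Finset
open scoped Matrix

section CommSemiring

variable {R : Type*} [CommSemiring R]

theorem sum_range_coeff_add_mul_eq (p : R[X]) {s k N N' : ℕ} (hN : p.natDegree < s + k * N)
    (hN' : p.natDegree < s + k * N') :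
    ∑ r ∈ range N, p.coeff (s + k * r) = ∑ r ∈ range N', p.coeff (s + k * r) := by
  have extend : ∀ M L, p.natDegree < s + k * M →
      ∑ r ∈ range (M + L), p.coeff (s + k * r) = ∑ r ∈ range M, p.coeff (s + k * r) := by
    intro M L hM
    have hzero : ∀ r, p.coeff (s + k * (M + r)) = 0 :=
      fun r => coeff_eq_zero_of_natDegree_lt (by nlinarith)
    simp only [sum_range_add, hzero, sum_const_zero, add_zero]
  rw [← extend N N' hN, ← extend N' N hN', add_comm]

theorem eval_eq_sum_of_pow_eq_one (p : R[X]) {k N : ℕ} (hN : p.natDegree < k * N) {x : R}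
    (hx : x ^ k = 1) :
    p.eval x = ∑ s : Fin k, (∑ r ∈ range N, p.coeff (s + k * r)) * x ^ (s : ℕ) := by
  rw [eval_eq_sum_range' (n := N * k) (by rwa [mul_comm]), ← Fin.sum_univ_eq_sum_range,
    ← finProdFinEquiv.sum_comp, Fintype.sum_prod_type, sum_comm]
  refine sum_congr rfl fun s _ => ?_
  rw [sum_mul, ← Fin.sum_univ_eq_sum_range]
  refine sum_congr rfl fun r _ => ?_
  rw [finProdFinEquiv_apply_val, pow_add, pow_mul, hx, one_pow, mul_one]

end CommSemiring

section Field

variable {F : Type*} [Field F]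

theorem card_le_of_injective_of_pow_eq_one {ι : Type*} [Fintype ι] {b : ι → F}
    (hb : Function.Injective b) {m : ℕ} (hm : 0 < m) (hroot : ∀ i, b i ^ m = 1) :
    Fintype.card ι ≤ m := by
  by_contra! hcard
  refine X_pow_sub_C_ne_zero hm (1 : F) (eq_zero_of_natDegree_lt_card_of_eval_eq_zero _ hb ?_ ?_)
  · simp [hroot]
  · rwa [natDegree_X_pow_sub_C]

variable {k : ℕ} {a : Fin k → F}

theorem mem_range_of_pow_eq_one (ha : Function.Injective a) (hroot : ∀ i, a i ^ k = 1)
    (hk : 0 < k) {x : F} (hx : x ^ k = 1) : x ∈ Set.range a := by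
  by_contra hxa
  have hcons : Function.Injective (Fin.cons x a : Fin (k + 1) → F) :=
    Fin.cons_injective_iff.mpr ⟨hxa, ha⟩
  have := card_le_of_injective_of_pow_eq_one hcons hk (Fin.cases hx hroot)
  simp at this

theorem exists_perm_apply_eq (ha : Function.Injective a) (hroot : ∀ i, a i ^ k = 1)
    {f : F → F} (hf : Function.Injective f) (hfroot : ∀ x, x ^ k = 1 → f x ^ k = 1) :
    ∃ σ : Equiv.Perm (Fin k), ∀ i, a (σ i) = f (a i) := by
  choose τ hτ using fun i : Fin k => mem_range_of_pow_eq_one ha hroot i.pos (hfroot _ (hroot i))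
  have hτinj : Function.Injective τ := fun i j hij => ha (hf (by rw [← hτ, ← hτ, hij]))
  exact ⟨Equiv.ofBijective τ (Finite.injective_iff_bijective.mp hτinj), hτ⟩

theorem ne_zero_of_pow_eq_one (hroot : ∀ i, a i ^ k = 1) (i : Fin k) : a i ≠ 0 :=
  (IsUnit.of_pow_eq_one (hroot i) i.pos.ne').ne_zero

theorem sq_prod_eq_one (ha : Function.Injective a) (hroot : ∀ i, a i ^ k = 1) :
    (∏ i, a i) ^ 2 = 1 := by
  obtain ⟨σ, hσ⟩ := exists_perm_apply_eq ha hroot inv_injective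
    (fun x hx => by rw [inv_pow, hx, inv_one])
  have hinv : ∏ i, a i = (∏ i, a i)⁻¹ := by
    rw [← prod_inv_distrib, ← Equiv.prod_comp σ]
    exact prod_congr rfl fun i _ => hσ i
  have hne : ∏ i, a i ≠ 0 := prod_ne_zero_iff.mpr fun i _ => ne_zero_of_pow_eq_one hroot i
  rw [sq]
  nth_rw 2 [hinv]
  exact mul_inv_cancel₀ hne

theorem exists_pow_ne_one (ha : Function.Injective a) (hroot : ∀ i, a i ^ k = 1) (hk : 0 < k)
    {m : ℕ} (hm : ¬ k ∣ m) : ∃ i, a i ^ m ≠ 1 := by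
  by_contra! h
  have hmod : 0 < m % k := Nat.pos_of_ne_zero fun h0 => hm (Nat.dvd_of_mod_eq_zero h0)
  have := card_le_of_injective_of_pow_eq_one ha hmod fun i => by
    rw [← pow_eq_pow_mod m (hroot i), h i]
  rw [Fintype.card_fin] at this
  exact absurd (Nat.mod_lt m hk) (not_lt.mpr this)

/-- Multiplication by a root of unity `g` with `g ^ m ≠ 1` permutes the summands and scales the
sum by `g ^ m`. -/
theorem sum_pow_eq_ite (ha : Function.Injective a) (hroot : ∀ i, a i ^ k = 1) (hk : 0 < k)
    (m : ℕ) : ∑ i, a i ^ m = if k ∣ m then (k : F) else 0 := by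
  split_ifs with hm
  · obtain ⟨c, rfl⟩ := hm
    simp [pow_mul, hroot]
  · obtain ⟨j, hj⟩ := exists_pow_ne_one ha hroot hk hm
    obtain ⟨σ, hσ⟩ := exists_perm_apply_eq ha hroot
      (mul_right_injective₀ (ne_zero_of_pow_eq_one hroot j))
      (fun x hx => by rw [mul_pow, hroot j, hx, one_mul])
    have hfix : ∑ i, a i ^ m = a j ^ m * ∑ i, a i ^ m := by
      rw [mul_sum, ← Equiv.sum_comp σ]
      exact sum_congr rfl fun i _ => by rw [hσ, mul_pow]
    have hzero : (1 - a j ^ m) * ∑ i, a i ^ m = 0 := by rw [one_sub_mul, ← hfix, sub_self]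
    exact (mul_eq_zero.mp hzero).resolve_left (sub_ne_zero.mpr (Ne.symm hj))

theorem vandermonde_transpose_mul_vandermonde_inv (ha : Function.Injective a)
    (hroot : ∀ i, a i ^ k = 1) :
    (Matrix.vandermonde a)ᵀ * Matrix.vandermonde (fun i => (a i)⁻¹) = (k : F) • 1 := by
  ext s t
  have hinv : ∀ i, (a i)⁻¹ ^ (t : ℕ) = a i ^ (k - t) := fun i => by
    rw [inv_pow]
    exact inv_eq_of_mul_eq_one_left (by rw [← pow_add, Nat.sub_add_cancel t.isLt.le, hroot i])
  have hdvd : k ∣ s + (k - t) ↔ s = t := by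
    refine ⟨fun h => Fin.ext ?_, fun h => by rw [h, Nat.add_sub_cancel' t.isLt.le]⟩
    have := Nat.eq_of_dvd_of_lt_two_mul (by omega) h (by omega)
    omega
  simp only [Matrix.mul_apply, Matrix.transpose_apply, Matrix.vandermonde_apply, hinv, ← pow_add,
    sum_pow_eq_ite ha hroot s.pos, hdvd, Matrix.smul_apply, Matrix.one_apply, smul_eq_mul,
    mul_ite, mul_one, mul_zero]

theorem det_vandermonde_mul_det_vandermonde_inv (ha : Function.Injective a)
    (hroot : ∀ i, a i ^ k = 1) :
    (Matrix.vandermonde a).det * (Matrix.vandermonde fun i => (a i)⁻¹).det = (k : F) ^ k := by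
  rw [← Matrix.det_transpose, ← Matrix.det_mul, vandermonde_transpose_mul_vandermonde_inv ha hroot,
    Matrix.det_smul, Matrix.det_one, mul_one, Fintype.card_fin]

theorem det_pow_mul_eval_div (ha : Function.Injective a) (hroot : ∀ i, a i ^ k = 1) (p : F[X])
    (d : ℕ) {N : ℕ} (hN : p.natDegree < N) :
    (Matrix.of fun i j => a j ^ d * p.eval (a i / a j)).det
      = (∏ i, a i) ^ d * (∏ s : Fin k, ∑ r ∈ range N, p.coeff (s + k * r)) * (k : F) ^ k := by
  set c : Fin k → F := fun s => ∑ r ∈ range N, p.coeff (s + k * r)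
  have hfac : (Matrix.of fun i j => a j ^ d * p.eval (a i / a j)) =
      Matrix.vandermonde a * Matrix.diagonal c *
        (Matrix.diagonal (fun j => a j ^ d) * Matrix.vandermonde fun j => (a j)⁻¹)ᵀ := by
    ext i j
    have hkN : p.natDegree < k * N := hN.trans_le (Nat.le_mul_of_pos_left N i.pos)
    rw [Matrix.of_apply, eval_eq_sum_of_pow_eq_one p hkN (by rw [div_pow, hroot, hroot, div_one]),
      mul_sum, Matrix.mul_apply]
    refine sum_congr rfl fun s _ => ?_
    simp only [Matrix.mul_diagonal, Matrix.transpose_apply, Matrix.diagonal_mul,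
      Matrix.vandermonde_apply, div_eq_mul_inv, mul_pow, c]
    ring
  rw [hfac, Matrix.det_mul, Matrix.det_mul, Matrix.det_transpose, Matrix.det_mul,
    Matrix.det_diagonal, Matrix.det_diagonal, prod_pow,
    ← det_vandermonde_mul_det_vandermonde_inv ha hroot]
  ring

end Field

theorem reverse_X_sq_add_X_add_one : reverse (X ^ 2 + X + 1 : ℤ[X]) = X ^ 2 + X + 1 := by
  have hdeg : (X ^ 2 + X + 1 : ℤ[X]).natDegree = 2 := by compute_degree!
  ext t
  rw [coeff_reverse, hdeg]
  rcases (show t = 0 ∨ t = 1 ∨ t = 2 ∨ 3 ≤ t by omega) with rfl | rfl | rfl | ht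
  all_goals first
    | rw [revAt_eq_self_of_lt (by omega)]
    | simp [revAt_le, coeff_X, coeff_one]

theorem reverse_X_sq_add_X_add_one_pow (n : ℕ) :
    reverse ((X ^ 2 + X + 1 : ℤ[X]) ^ n) = (X ^ 2 + X + 1) ^ n := by
  induction n with
  | zero => simpa using reverse_C (1 : ℤ)
  | succ m ih => rw [pow_succ, reverse_mul_of_domain, ih, reverse_X_sq_add_X_add_one]

theorem natDegree_X_sq_add_X_add_one_pow (n : ℕ) :
    ((X ^ 2 + X + 1 : ℤ[X]) ^ n).natDegree = 2 * n := by
  rw [natDegree_pow, show (X ^ 2 + X + 1 : ℤ[X]).natDegree = 2 by compute_degree!, mul_comm]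

theorem coeff_X_sq_add_X_add_one_pow_symm {n t : ℕ} (ht : t ≤ 2 * n) :
    ((X ^ 2 + X + 1 : ℤ[X]) ^ n).coeff (2 * n - t) = ((X ^ 2 + X + 1 : ℤ[X]) ^ n).coeff t := by
  conv_rhs => rw [← reverse_X_sq_add_X_add_one_pow, coeff_reverse,
    natDegree_X_sq_add_X_add_one_pow, revAt_le ht]

theorem trinomialCoeff_sub (n t : ℕ) :
    trinomialCoeff n (n - t) = ((X ^ 2 + X + 1 : ℤ[X]) ^ n).coeff t := by
  unfold trinomialCoeff
  by_cases ht : t ≤ 2 * n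
  · rw [if_pos (by omega), show ((n : ℤ) + (n - t)).toNat = 2 * n - t by omega,
      coeff_X_sq_add_X_add_one_pow_symm ht]
  · rw [if_neg (by omega), coeff_eq_zero_of_natDegree_lt (by
      rw [natDegree_X_sq_add_X_add_one_pow]; omega)]

theorem intCast_trinomialCoeff_sub {R : Type*} [Ring R] (n t : ℕ) :
    (trinomialCoeff n (n - t) : R) = ((X ^ 2 + X + 1 : R[X]) ^ n).coeff t := by
  rw [trinomialCoeff_sub, ← eq_intCast (Int.castRingHom R), ← coeff_map]
  simp [Polynomial.map_pow]

theorem stmt_15_general (F : Type*) [Field F] (q k : ℕ)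
    (a : Fin k → F) (ha : Function.Injective a) (hroot : ∀ i, a i ^ k = 1) :
    Matrix.det (Matrix.of fun i j : Fin k =>
        (a i ^ 2 + a i * a j + a j ^ 2) ^ ((q - 3) / 2))
      = (∏ s ∈ Finset.range k, ∑ r ∈ Finset.range ((q - 3 - s) / k + 1),
          (trinomialCoeff ((q - 3) / 2)
            ((((q - 3) / 2 : ℕ) : ℤ) - (s : ℤ) - (k : ℤ) * (r : ℤ)) : F)) *
        (k : F) ^ k := by
  set n := (q - 3) / 2
  set P : F[X] := (X ^ 2 + X + 1) ^ n
  have hdeg : P.natDegree ≤ 2 * n := by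
    rw [mul_comm]
    exact natDegree_pow_le_of_le n (by compute_degree)
  have hentry : (Matrix.of fun i j : Fin k => (a i ^ 2 + a i * a j + a j ^ 2) ^ n)
      = Matrix.of fun i j => a j ^ (2 * n) * P.eval (a i / a j) := by
    ext i j
    have := ne_zero_of_pow_eq_one hroot j
    simp only [Matrix.of_apply, P, eval_pow, eval_add, eval_X, eval_one, pow_mul, ← mul_pow]
    field_simp
  rw [hentry, det_pow_mul_eval_div ha hroot P (2 * n) (N := 2 * n + 1) (by omega),
    pow_mul, sq_prod_eq_one ha hroot, one_pow, one_mul, ← Fin.prod_univ_eq_prod_range]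
  congr 1
  refine prod_congr rfl fun s _ => ?_
  have hk := s.pos
  rw [sum_range_coeff_add_mul_eq P (N' := (q - 3 - s) / k + 1) (by nlinarith)
    (by have := Nat.lt_mul_div_succ (q - 3 - s) hk; omega)]
  refine sum_congr rfl fun r _ => ?_
  rw [show (n : ℤ) - s - k * r = n - ((s + k * r : ℕ) : ℤ) by push_cast; ring,
    intCast_trinomialCoeff_sub]

theorem stmt_15 (F : Type*) [Field F] [Fintype F] (q p k : ℕ)
    (hq : Fintype.card F = q) [Fact p.Prime] [CharP F p] (hp2 : p ≠ 2)
    (hk1 : 1 < k) (hk2 : k ≤ q - 1) (hdvd : k ∣ q - 1)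
    (a : Fin k → F) (ha : Function.Injective a) (hroot : ∀ i, a i ^ k = 1) :
    Matrix.det (Matrix.of fun i j : Fin k =>
        (a i ^ 2 + a i * a j + a j ^ 2) ^ ((q - 3) / 2))
      = (∏ s ∈ Finset.range k, ∑ r ∈ Finset.range ((q - 3 - s) / k + 1),
          (trinomialCoeff ((q - 3) / 2)
            ((((q - 3) / 2 : ℕ) : ℤ) - (s : ℤ) - (k : ℤ) * (r : ℤ)) : F)) *
        (k : F) ^ k :=
  stmt_15_general F q k a ha hroot
end
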